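/- arXiv:2504.09368 — 2 statements merged into one kernel-verified Lean document; each statement's English description precedes it below -/
import Mathlib

section
/- Let Q be a rack. The right multiplication group Rmlt(Q) is abelian if and only if Q is both medial and paragraphic. -/
/-- A (right) rack: a set with a binary operation `mul` such that every right
translation `R_x : y ↦ y * x` is a bijection (with inverse given by the right
division `div`), satisfying right self-distributivity. -/
class RightRack (Q : Type*) where
  mul : Q → Q → Q
  div : Q → Q → Q
  div_mul : ∀ x y : Q, mul (div x y) y = x
  mul_div : ∀ x y : Q, div (mul x y) y = x
  self_distrib : ∀ x y z : Q, mul (mul x y) z = mul (mul x z) (mul y z)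

namespace RightRack

/-- The right translation `R_x` as a permutation of `Q`. -/
def rt {Q : Type*} [RightRack Q] (x : Q) : Equiv.Perm Q where
  toFun y := mul y x
  invFun y := div y x
  left_inv y := mul_div y x
  right_inv y := div_mul y x

/-- The right multiplication group `Rmlt(Q)`: the subgroup of the symmetric group
on `Q` generated by all right translations. -/
def rmlt (Q : Type*) [RightRack Q] : Subgroup (Equiv.Perm Q) :=
  Subgroup.closure (Set.range (rt : Q → Equiv.Perm Q))

end RightRack

/-- A quandle: an idempotent rack. -/
class RightQuandle (Q : Type*) extends RightRack Q where
  idem : ∀ x : Q, mul x x = x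

/-!
Since `(R_x R_y) z = (z * y) * x`, the group `Rmlt(Q)`, being generated by the right
translations, is abelian exactly when `(z * x) * y = (z * y) * x` for all `x, y, z`.
In a rack this identity forces `w * (x * y) = w * x`: write `w = v * y` and apply right
self-distributivity. Mediality and the paragraphic law follow at once. Conversely, mediality
with `y := x * v` gives `(x * u) * (v * x) = (x * v) * u` after two uses of the paragraphic
law, and combining this with one more use of mediality gives the commutation identity.
-/

namespace RightRack

variable {Q : Type*} [RightRack Q]

local infixl:70 " ◃ " => mul

theorem rt_mem_rmlt (x : Q) : rt x ∈ rmlt Q :=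
  Subgroup.subset_closure ⟨x, rfl⟩

theorem commute_rt_iff {x y : Q} : Commute (rt x) (rt y) ↔ ∀ z : Q, z ◃ y ◃ x = z ◃ x ◃ y :=
  Equiv.ext_iff

theorem rmlt_comm_iff :
    (∀ g ∈ rmlt Q, ∀ h ∈ rmlt Q, g * h = h * g) ↔ ∀ z x y : Q, z ◃ x ◃ y = z ◃ y ◃ x := by
  constructor
  · intro hcomm z x y
    exact commute_rt_iff.mp (hcomm _ (rt_mem_rmlt y) _ (rt_mem_rmlt x)) z
  · intro hrt
    have hgen : ∀ g ∈ Set.range (rt : Q → Equiv.Perm Q), ∀ h ∈ Set.range (rt : Q → Equiv.Perm Q),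
        g * h = h * g := by
      rintro _ ⟨x, rfl⟩ _ ⟨y, rfl⟩
      exact commute_rt_iff.mpr fun z => hrt z y x
    intro g hg h hh
    exact Set.centralizer_centralizer_comm_of_comm hgen
      g (Subgroup.closure_le_centralizer_centralizer _ hg)
      h (Subgroup.closure_le_centralizer_centralizer _ hh)

theorem mul_mul_right_of_rt_comm (hrt : ∀ z x y : Q, z ◃ x ◃ y = z ◃ y ◃ x) (w x y : Q) :
    w ◃ (x ◃ y) = w ◃ x := by
  obtain ⟨v, rfl⟩ : ∃ v, v ◃ y = w := ⟨div w y, div_mul w y⟩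
  calc v ◃ y ◃ (x ◃ y) = v ◃ x ◃ y := (self_distrib v x y).symm
    _ = v ◃ y ◃ x := hrt v x y

theorem medial_of_rt_comm (hrt : ∀ z x y : Q, z ◃ x ◃ y = z ◃ y ◃ x) (x u v y : Q) :
    x ◃ u ◃ (v ◃ y) = x ◃ v ◃ (u ◃ y) :=
  calc x ◃ u ◃ (v ◃ y) = x ◃ u ◃ v := mul_mul_right_of_rt_comm hrt _ v y
    _ = x ◃ v ◃ u := hrt x u v
    _ = x ◃ v ◃ (u ◃ y) := (mul_mul_right_of_rt_comm hrt _ u y).symm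

theorem paragraphic_of_rt_comm (hrt : ∀ z x y : Q, z ◃ x ◃ y = z ◃ y ◃ x) (x y : Q) :
    x ◃ (y ◃ x) = x ◃ y :=
  mul_mul_right_of_rt_comm hrt x y x

theorem mul_mul_mul_swap_of_medial_paragraphic
    (med : ∀ x u v y : Q, x ◃ u ◃ (v ◃ y) = x ◃ v ◃ (u ◃ y))
    (par : ∀ x y : Q, x ◃ (y ◃ x) = x ◃ y) (x u v : Q) :
    x ◃ u ◃ (v ◃ x) = x ◃ v ◃ u := by
  have h := med x u v (x ◃ v)
  rwa [par v x, par (x ◃ v) u] at h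

theorem rt_comm_of_medial_paragraphic
    (med : ∀ x u v y : Q, x ◃ u ◃ (v ◃ y) = x ◃ v ◃ (u ◃ y))
    (par : ∀ x y : Q, x ◃ (y ◃ x) = x ◃ y) (z x y : Q) :
    z ◃ x ◃ y = z ◃ y ◃ x :=
  calc z ◃ x ◃ y = z ◃ y ◃ (x ◃ z) := (mul_mul_mul_swap_of_medial_paragraphic med par z y x).symm
    _ = z ◃ x ◃ (y ◃ z) := med z y x z
    _ = z ◃ y ◃ x := mul_mul_mul_swap_of_medial_paragraphic med par z x y

end RightRack

/-- Let `Q` be a rack. The right multiplication group `Rmlt(Q)` is abelian if and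
only if `Q` is both medial (`(x*u)*(v*y) = (x*v)*(u*y)`) and paragraphic
(`x*(y*x) = x*y`). -/
theorem rmlt_abelian_iff_medial_paragraphic {Q : Type*} [RightRack Q] :
    (∀ g ∈ RightRack.rmlt Q, ∀ h ∈ RightRack.rmlt Q, g * h = h * g) ↔
      ((∀ x u v y : Q, RightRack.mul (RightRack.mul x u) (RightRack.mul v y)
          = RightRack.mul (RightRack.mul x v) (RightRack.mul u y)) ∧
        (∀ x y : Q, RightRack.mul x (RightRack.mul y x) = RightRack.mul x y)) := by
  rw [RightRack.rmlt_comm_iff]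
  exact ⟨fun hrt => ⟨RightRack.medial_of_rt_comm hrt, RightRack.paragraphic_of_rt_comm hrt⟩,
    fun ⟨med, par⟩ => RightRack.rt_comm_of_medial_paragraphic med par⟩
end

section
/- Let Q be a rack and C an R-clique of Q. Then the subrack ⟨C⟩ generated by C is also an R-clique of Q. -/
/-- The R-commuting relation: `a ∼ b` iff `R_a ∘ R_b = R_b ∘ R_a`. -/
def rsim {Q : Type*} [RightRack Q] (a b : Q) : Prop :=
  ∀ y : Q, RightRack.mul (RightRack.mul y b) a = RightRack.mul (RightRack.mul y a) b

/-- The subrack `⟨A⟩` generated by a subset `A` of a rack: the smallest subset of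
`Q` containing `A` and closed under both `*` and `/`. -/
def subrackClosure {Q : Type*} [RightRack Q] (A : Set Q) : Set Q :=
  ⋂₀ {S : Set Q | A ⊆ S ∧ (∀ x ∈ S, ∀ y ∈ S, RightRack.mul x y ∈ S) ∧
      (∀ x ∈ S, ∀ y ∈ S, RightRack.div x y ∈ S)}

namespace RightRack

open Equiv

variable {Q : Type*} [RightRack Q]

/-- Self-distributivity says `R_{a*b} ∘ R_b = R_b ∘ R_a`. -/
lemma rt_mul (a b : Q) : rt (mul a b) = rt b * rt a * (rt b)⁻¹ := by
  ext y
  change mul y (mul a b) = mul (mul (div y b) a) b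
  rw [self_distrib, div_mul]

lemma rt_div (a b : Q) : rt (div a b) = (rt b)⁻¹ * rt a * rt b := by
  have h := rt_mul (div a b) b
  rw [div_mul] at h
  rw [h]
  group

lemma subrackClosure_subset {A S : Set Q} (hAS : A ⊆ S)
    (hmul : ∀ x ∈ S, ∀ y ∈ S, mul x y ∈ S) (hdiv : ∀ x ∈ S, ∀ y ∈ S, div x y ∈ S) :
    subrackClosure A ⊆ S :=
  Set.sInter_subset_of_mem ⟨hAS, hmul, hdiv⟩

/-- The elements whose right translations lie in a subgroup `H` of `Sym(Q)` form a subrack,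
because `R_{a*b}` and `R_{a/b}` are conjugates of `R_a` by `R_b^{±1}`. -/
lemma rt_mem_of_mem_subrackClosure {A : Set Q} {H : Subgroup (Perm Q)}
    (hA : ∀ a ∈ A, rt a ∈ H) {a : Q} (ha : a ∈ subrackClosure A) : rt a ∈ H := by
  refine subrackClosure_subset (S := {a | rt a ∈ H}) hA ?_ ?_ ha
  · intro x hx y hy
    rw [Set.mem_ofPred_eq, rt_mul]
    exact H.mul_mem (H.mul_mem hy hx) (H.inv_mem hy)
  · intro x hx y hy
    rw [Set.mem_ofPred_eq, rt_div]
    exact H.mul_mem (H.mul_mem (H.inv_mem hy) hx) hy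

end RightRack

section RCommuting

open RightRack

variable {Q : Type*} [RightRack Q]

lemma rsim_iff_commute {a b : Q} : rsim a b ↔ Commute (rt a) (rt b) := by
  rw [Commute, SemiconjBy, Equiv.ext_iff]
  rfl

lemma rsim.symm {a b : Q} (h : rsim a b) : rsim b a :=
  fun y => (h y).symm

/-- `R_a` lies in the centralizer of `{R_b | b ∈ B}`, a subgroup of `Sym(Q)`. -/
lemma rsim_of_mem_subrackClosure {A B : Set Q} (h : ∀ a ∈ A, ∀ b ∈ B, rsim a b) :
    ∀ a ∈ subrackClosure A, ∀ b ∈ B, rsim a b := by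
  intro a ha b hb
  have hcent : rt a ∈ Subgroup.centralizer (rt '' B) := by
    refine rt_mem_of_mem_subrackClosure (fun c hc => ?_) ha
    rw [Subgroup.mem_centralizer_iff]
    rintro _ ⟨d, hd, rfl⟩
    exact (rsim_iff_commute.mp (h c hc d hd)).symm
  exact rsim_iff_commute.mpr (Subgroup.mem_centralizer_iff.mp hcent (rt b) ⟨b, hb, rfl⟩).symm

end RCommuting

/-- Let `Q` be a rack and `C` an R-clique of `Q` (all elements pairwise
R-commute). Then the subrack `⟨C⟩` generated by `C` is also an R-clique of `Q`. -/
theorem subrackClosure_of_rclique_is_rclique {Q : Type*} [RightRack Q] (C : Set Q)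
    (hC : ∀ a ∈ C, ∀ b ∈ C, rsim a b) :
    ∀ a ∈ subrackClosure C, ∀ b ∈ subrackClosure C, rsim a b := by
  have hleft : ∀ a ∈ subrackClosure C, ∀ b ∈ C, rsim a b := rsim_of_mem_subrackClosure hC
  exact rsim_of_mem_subrackClosure fun b hb a ha => (hleft a ha b hb).symm
end
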